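/- Let k be a field and consider the persistence module M : ℕ×ℕ → Vect_k with generators g at (0,1) and h at (1,0) identified at (1,1); explicitly, M(c,d) = k if exactly one of c ≥ 1, d ≥ 1 holds, M(c,d) = k if both hold, with the two generators mapped to the same basis vector, and M(c,d) = 0 if neither holds (so M(0,0) = 0). Then M is not isomorphic to any direct sum of hook interval modules. -/

import Mathlib

open scoped Classical DirectSum

/-- Membership of `α ∈ ℕ²` in the support `{α : p ≤ α, α ≱ q}` of the hook
interval `I[p,q)`, where `p ≤ q` live in `(ℕ ∪ {∞})²`. -/
def hookSupp (p q : WithTop ℕ × WithTop ℕ) (α : ℕ × ℕ) : Prop :=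
  (p.1 ≤ (α.1 : WithTop ℕ) ∧ p.2 ≤ (α.2 : WithTop ℕ)) ∧
    ¬ (q.1 ≤ (α.1 : WithTop ℕ) ∧ q.2 ≤ (α.2 : WithTop ℕ))

/-- Component of the hook interval module `I[p,q)` at `α`. -/
noncomputable def hookV (k : Type) [Field k] (p q : WithTop ℕ × WithTop ℕ)
    (α : ℕ × ℕ) : Submodule k k :=
  if hookSupp p q α then ⊤ else ⊥

/-- Transition maps of the hook interval module `I[p,q)`: identities inside the
support, zero otherwise. -/
noncomputable def hookTV (k : Type) [Field k] (p q : WithTop ℕ × WithTop ℕ)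
    (α β : ℕ × ℕ) : hookV k p q α →ₗ[k] hookV k p q β where
  toFun v := ⟨if hookSupp p q β then (v : k) else 0, by
    by_cases h : hookSupp p q β
    · rw [if_pos h]; unfold hookV; rw [if_pos h]; exact Submodule.mem_top
    · rw [if_neg h]; exact Submodule.zero_mem _⟩
  map_add' v w := by ext; by_cases h : hookSupp p q β <;> simp [h]
  map_smul' c v := by ext; by_cases h : hookSupp p q β <;> simp [h]

/-- Component at `α` of the persistence module `M` corresponding to
`k[x,y]²/⟨(x,-y)⟩` (generators at `(0,1)` and `(1,0)` merged at `(1,1)`):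
`M(0,0) = 0` and `M(α) = k` for `α ≠ (0,0)`. -/
noncomputable def MV (k : Type) [Field k] (α : ℕ × ℕ) : Submodule k k :=
  if α = 0 then ⊥ else ⊤

/-- Transition maps of `M`: identities between nonzero components. -/
noncomputable def MT (k : Type) [Field k] (α β : ℕ × ℕ) : MV k α →ₗ[k] MV k β where
  toFun v := ⟨if β = 0 then 0 else (v : k), by
    by_cases h : β = 0
    · rw [if_pos h]; exact Submodule.zero_mem _
    · rw [if_neg h]; unfold MV; rw [if_neg h]; exact Submodule.mem_top⟩
  map_add' v w := by ext; by_cases h : β = 0 <;> simp [h]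
  map_smul' c v := by ext; by_cases h : β = 0 <;> simp [h]

section Aux

variable {k : Type} [Field k]

lemma hook_elem_zero {p q : WithTop ℕ × WithTop ℕ} {α : ℕ × ℕ} (h : ¬ hookSupp p q α)
    (x : hookV k p q α) : x = 0 := by
  have hx := x.2
  simp only [hookV, if_neg h, Submodule.mem_bot] at hx
  exact Subtype.ext hx

lemma hookSupp_of_elem_ne {p q : WithTop ℕ × WithTop ℕ} {α : ℕ × ℕ}
    (x : hookV k p q α) (hx : x ≠ 0) : hookSupp p q α := by
  by_contra h; exact hx (hook_elem_zero h x)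

lemma one_mem_hookV {p q : WithTop ℕ × WithTop ℕ} {α : ℕ × ℕ} (h : hookSupp p q α) :
    (1 : k) ∈ hookV k p q α := by
  unfold hookV; rw [if_pos h]; exact Submodule.mem_top

end Aux

/-- the persistence module `M` with `M(0,0) = 0`, `M(α) = k` for
`α ≠ (0,0)`, and identity transition maps between nonzero components (the
module corresponding to `k[x,y]²/⟨(x,-y)⟩`) is not isomorphic, as a persistence
module, to any direct sum of hook interval modules. -/
theorem stmt_13 (k : Type) [Field k] :
    ¬ ∃ (ι : Type) (p q : ι → WithTop ℕ × WithTop ℕ), (∀ i, p i ≤ q i) ∧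
      ∃ e : ∀ α : ℕ × ℕ, MV k α ≃ₗ[k] ⨁ i, hookV k (p i) (q i) α,
        ∀ α β : ℕ × ℕ, α ≤ β →
          (DFinsupp.mapRange.linearMap fun i => hookTV k (p i) (q i) α β).comp
              (e α).toLinearMap
            = (e β).toLinearMap.comp (MT k α β) := by
  rintro ⟨ι, p, q, hpq, e, comm⟩
  -- Step 1: for any nonzero α ≤ (1,1), there is an index supported at α and at (1,1).
  have key : ∀ α : ℕ × ℕ, α ≠ 0 → α ≤ (1, 1) →
      ∃ i, hookSupp (p i) (q i) α ∧ hookSupp (p i) (q i) (1, 1) := by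
    intro α hα hle
    have ha : (1 : k) ∈ MV k α := by simp [MV, hα]
    set a : MV k α := ⟨1, ha⟩ with ha_def
    have hcomm := congrArg (fun f => f a) (comm α (1, 1) hle)
    simp only [LinearMap.comp_apply, LinearMap.coe_comp, LinearEquiv.coe_coe,
      Function.comp_apply, LinearEquiv.coe_toLinearMap] at hcomm
    -- RHS is nonzero
    have hMT : MT k α (1, 1) a ≠ 0 := by
      intro h
      have := congrArg (Subtype.val) h
      simp [MT, ha_def] at this
    have hRHS : e (1, 1) (MT k α (1, 1) a) ≠ 0 := by
      intro h
      exact hMT ((e (1, 1)).map_eq_zero_iff.mp h)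
    have : ∃ i, (DFinsupp.mapRange.linearMap
        (fun i => hookTV k (p i) (q i) α (1, 1)) (e α a)) i ≠ 0 := by
      by_contra hc
      push_neg at hc
      apply hRHS
      exact hcomm.symm.trans (by ext i; simpa using congrArg Subtype.val (hc i))
    obtain ⟨i, hi⟩ := this
    rw [DFinsupp.mapRange.linearMap_apply, DFinsupp.mapRange_apply] at hi
    refine ⟨i, ?_, hookSupp_of_elem_ne _ hi⟩
    apply hookSupp_of_elem_ne (e α a i)
    intro h0
    apply hi
    rw [h0]
    exact map_zero _
  obtain ⟨i, hi01, hi11⟩ := key (0, 1) (by simp [Prod.ext_iff]) (by constructor <;> simp)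
  obtain ⟨j, hj10, hj11⟩ := key (1, 0) (by simp [Prod.ext_iff]) (by constructor <;> simp)
  -- Step 2: i = j, since M(1,1) is one-dimensional.
  have hij : i = j := by
    by_contra hne
    set w : ⨁ l, hookV k (p l) (q l) (1, 1) :=
      DFinsupp.single i ⟨1, one_mem_hookV hi11⟩ with hw
    set w' : ⨁ l, hookV k (p l) (q l) (1, 1) :=
      DFinsupp.single j ⟨1, one_mem_hookV hj11⟩ with hw'
    set A : MV k (1, 1) := (e (1, 1)).symm w with hA
    set B : MV k (1, 1) := (e (1, 1)).symm w' with hB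
    have hBne : (B : k) ≠ 0 := by
      intro h
      have : B = 0 := Subtype.ext h
      rw [hB, (e (1, 1)).symm_apply_eq, map_zero] at this
      have := congrArg (fun f => f j) this
      simp only [hw'] at this
      rw [DFinsupp.single_eq_same] at this
      exact one_ne_zero (congrArg Subtype.val this)
    have hAB : A = ((A : k) / (B : k)) • B := by
      apply Subtype.ext
      simp [div_mul_cancel₀ _ hBne]
    have hww : w = ((A : k) / (B : k)) • w' := by
      have := congrArg (e (1, 1)) hAB
      rw [map_smul] at this
      simpa [hA, hB] using this
    have h2 : w i = ((A : k) / (B : k)) • w' i := by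
      rw [hww]; exact DFinsupp.smul_apply _ _ _
    rw [hw, hw', DFinsupp.single_eq_same, DFinsupp.single_eq_of_ne hne,
      smul_zero] at h2
    exact one_ne_zero (congrArg Subtype.val h2)
  subst hij
  -- Step 3: the hook at i is supported at (0,0), contradicting M(0,0) = 0.
  have hsupp00 : hookSupp (p i) (q i) (0, 0) := by
    obtain ⟨⟨h1, h2⟩, h3⟩ := hi01
    obtain ⟨⟨h4, h5⟩, h6⟩ := hj10
    refine ⟨⟨h1, h5⟩, fun ⟨hq1, hq2⟩ => h3 ⟨hq1, hq2.trans (by exact_mod_cast Nat.zero_le 1)⟩⟩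
  set s : ⨁ l, hookV k (p l) (q l) (0, 0) :=
    DFinsupp.single i ⟨1, one_mem_hookV hsupp00⟩ with hs
  have hC : ((e (0, 0)).symm s : k) = 0 := by
    have := ((e (0, 0)).symm s).2
    have h' : MV k (0, 0) = ⊥ := by unfold MV; exact if_pos rfl
    have key2 : ∀ y : k, y ∈ MV k (0, 0) → y = 0 := by
      intro y hy; rw [h'] at hy; exact (Submodule.mem_bot k).mp hy
    exact key2 _ this
  have : s = 0 := by
    have h0 : (e (0, 0)).symm s = 0 := Subtype.ext hC
    rw [(e (0, 0)).symm_apply_eq, map_zero] at h0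
    exact h0
  have := congrArg (fun f => f i) this
  simp only [hs] at this
  rw [DFinsupp.single_eq_same] at this
  exact one_ne_zero (congrArg Subtype.val this)
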